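/- arXiv:2008.08233 — 6 statements merged into one kernel-verified Lean document; each statement's English description precedes it below -/
import Mathlib

section
/- Under the genericity condition σ_n(L) > σ_{n+1}([L h]), the matrix P = LᵀL - σ_{n+1}([L h])² I_n is positive definite (hence invertible), and the TLS solution satisfies x = P⁻¹ Lᵀ h whenever (x, -1)ᵀ is an eigenvector of [L h]ᵀ[L h] with eigenvalue σ_{n+1}([L h])². -/
open Matrix

/-!
Since `σ_n²` bounds the Rayleigh quotient of `LᵀL` from below and `σ_{n+1}² < σ_n²`, the
quadratic form of `P = LᵀL - σ_{n+1}² I` is at least `(σ_n² - σ_{n+1}²)‖v‖² > 0`, so `P` is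
positive definite, hence invertible. The first block row of the eigenvector equation reads
`P x = Lᵀh`, and inverting `P` gives the closed form.
-/

namespace Matrix

variable {ι : Type*} [Fintype ι] [DecidableEq ι]

theorem posDef_sub_smul_one_of_le_dotProduct_mulVec {A : Matrix ι ι ℝ} (hA : A.IsHermitian)
    {μ c : ℝ} (hc : c < μ) (hμ : ∀ v : ι → ℝ, μ * (v ⬝ᵥ v) ≤ v ⬝ᵥ (A *ᵥ v)) :
    (A - c • 1).PosDef := by
  refine .of_dotProduct_mulVec_pos (hA.sub (isHermitian_one.smul (IsSelfAdjoint.all c)))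
    fun v hv => ?_
  have hvv : 0 < v ⬝ᵥ v := by simpa using dotProduct_self_star_pos_iff.mpr hv
  have hform : star v ⬝ᵥ ((A - c • 1) *ᵥ v) = v ⬝ᵥ (A *ᵥ v) - c * (v ⬝ᵥ v) := by
    simp only [star_trivial, sub_mulVec, smul_mulVec, one_mulVec, dotProduct_sub,
      dotProduct_smul, smul_eq_mul]
  rw [hform]
  nlinarith [hμ v]

theorem eq_inv_mulVec_of_mulVec_eq {K : Type*} [Field K] {A : Matrix ι ι K} (hA : IsUnit A)
    {x b : ι → K} (hx : A *ᵥ x = b) : x = A⁻¹ *ᵥ b := by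
  let := hA.invertible
  exact (inv_mulVec_eq_vec hx.symm).symm

end Matrix

theorem tls_posdef_and_closed_form_general (m n : ℕ)
    (L : Matrix (Fin m) (Fin n) ℝ) (h : Fin m → ℝ) (σn σ : ℝ)
    (hσ : 0 ≤ σ) (hgen : σn > σ)
    (hσn : ∀ v : Fin n → ℝ, σn ^ 2 * (∑ i, v i ^ 2) ≤ v ⬝ᵥ (Lᵀ *ᵥ (L *ᵥ v))) :
    (Lᵀ * L - σ ^ 2 • (1 : Matrix (Fin n) (Fin n) ℝ)).PosDef ∧
      ∀ x : Fin n → ℝ,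
        (Lᵀ *ᵥ (L *ᵥ x) - Lᵀ *ᵥ h = σ ^ 2 • x ∧ h ⬝ᵥ (L *ᵥ x) - h ⬝ᵥ h = -σ ^ 2) →
        x = (Lᵀ * L - σ ^ 2 • (1 : Matrix (Fin n) (Fin n) ℝ))⁻¹ *ᵥ (Lᵀ *ᵥ h) := by
  have hgram : (Lᵀ * L).IsHermitian := by
    simpa using isHermitian_conjTranspose_mul_self L
  have hrayleigh : ∀ v, σn ^ 2 * (v ⬝ᵥ v) ≤ v ⬝ᵥ ((Lᵀ * L) *ᵥ v) := fun v => by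
    simpa [← mulVec_mulVec, dotProduct, sq] using hσn v
  have hσ2 : σ ^ 2 < σn ^ 2 := by nlinarith
  have hpd := posDef_sub_smul_one_of_le_dotProduct_mulVec hgram hσ2 hrayleigh
  refine ⟨hpd, fun x ⟨heig, _⟩ => eq_inv_mulVec_of_mulVec_eq hpd.isUnit ?_⟩
  rw [sub_mulVec, smul_mulVec, one_mulVec, ← mulVec_mulVec, ← heig, sub_sub_cancel]

/-- Under the genericity condition `σ_n(L) > σ_{n+1}([L h])`, the matrix
`P = LᵀL - σ_{n+1}²I` is positive definite, and the TLS solution satisfies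
`x = P⁻¹Lᵀh` whenever `(x,-1)ᵀ` is an eigenvector of `[L h]ᵀ[L h]` with
eigenvalue `σ_{n+1}²`.  Here the fact that `σn` is the smallest singular value
of `L` is encoded by the Rayleigh-quotient lower bound `σn²‖v‖² ≤ vᵀLᵀLv`, and
`σ` stands for `σ_{n+1}([L h]) ≥ 0`. -/
theorem tls_posdef_and_closed_form (m n : ℕ) (hmn : m > n)
    (L : Matrix (Fin m) (Fin n) ℝ) (h : Fin m → ℝ) (σn σ : ℝ)
    (hσ : 0 ≤ σ) (hgen : σn > σ)
    (hσn : ∀ v : Fin n → ℝ, σn ^ 2 * (∑ i, v i ^ 2) ≤ v ⬝ᵥ (Lᵀ *ᵥ (L *ᵥ v))) :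
    (Lᵀ * L - σ ^ 2 • (1 : Matrix (Fin n) (Fin n) ℝ)).PosDef ∧
      ∀ x : Fin n → ℝ,
        (Lᵀ *ᵥ (L *ᵥ x) - Lᵀ *ᵥ h = σ ^ 2 • x ∧ h ⬝ᵥ (L *ᵥ x) - h ⬝ᵥ h = -σ ^ 2) →
        x = (Lᵀ * L - σ ^ 2 • (1 : Matrix (Fin n) (Fin n) ℝ))⁻¹ *ᵥ (Lᵀ *ᵥ h) :=
  tls_posdef_and_closed_form_general m n L h σn σ hσ hgen hσn
end

section
/- Let C ∈ ℝ^{p×n} have full row rank and d ∈ ℝ^p. Set x_C = C†d and ω = 1 + ‖x_C‖₂². Then the Moore–Penrose pseudoinverse of the augmented matrix C̃ = [C d] ∈ ℝ^{p×(n+1)} is given by the block matrix C̃† = [ (I_n - ω⁻¹ x_C x_Cᵀ) C† ; ω⁻¹ x_Cᵀ C† ]. -/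
open Matrix

/-- `X` is the Moore–Penrose pseudoinverse of `C` (the four Penrose conditions). -/
def IsMoorePenrose {p n : Type*} [Fintype p] [Fintype n]
    (C : Matrix p n ℝ) (X : Matrix n p ℝ) : Prop :=
  C * X * C = C ∧ X * C * X = X ∧ (C * X)ᵀ = C * X ∧ (X * C)ᵀ = X * C

/-!
Full row rank makes `C` surjective, so `C C† = 1`; appending the column `d = C x_C` keeps the
candidate `X̃` a right inverse of `C̃ = [C d]`, whatever the scalar `ω` is. A right inverse `X̃`
is the pseudoinverse as soon as `X̃ C̃` is symmetric, and this is where `ω = 1 + ‖x_C‖²` enters: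
it is the value for which `(I - ω⁻¹ x_C x_Cᵀ) x_C = ω⁻¹ x_C`, so that both off-diagonal blocks
of `X̃ C̃` equal `ω⁻¹ x_C`.
-/

variable {m n : Type*} [Fintype n]

theorem Matrix.mulVec_surjective_of_rank_eq [Fintype m] {K : Type*} [Field K]
    {C : Matrix m n K} (hrk : C.rank = Fintype.card m) : Function.Surjective C.mulVec := by
  have hrange : LinearMap.range C.mulVecLin = ⊤ :=
    Submodule.eq_top_of_finrank_eq <| by
      rw [← Matrix.rank, hrk, Module.finrank_fintype_fun_eq_card]
  exact LinearMap.range_eq_top.mp hrange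

theorem Matrix.one_sub_smul_vecMulVec_self_mulVec_self [DecidableEq n] (x : n → ℝ) :
    (1 - (1 + x ⬝ᵥ x)⁻¹ • vecMulVec x x) *ᵥ x = (1 + x ⬝ᵥ x)⁻¹ • x := by
  have hω : 1 + x ⬝ᵥ x ≠ 0 := by
    have : 0 ≤ x ⬝ᵥ x := dotProduct_self_star_nonneg x
    positivity
  rw [sub_mulVec, one_mulVec, smul_mulVec, vecMulVec_mulVec]
  ext i
  simp only [Pi.sub_apply, Pi.smul_apply, MulOpposite.smul_eq_mul_unop, MulOpposite.unop_op,
    smul_eq_mul]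
  field_simp
  ring

namespace IsMoorePenrose

variable [Fintype m] {C : Matrix m n ℝ} {X : Matrix n m ℝ}

theorem of_mul_eq_one [DecidableEq m] (hCX : C * X = 1) (hXC : (X * C)ᵀ = X * C) :
    IsMoorePenrose C X :=
  ⟨by rw [hCX, Matrix.one_mul], by rw [Matrix.mul_assoc, hCX, Matrix.mul_one],
    by rw [hCX, transpose_one], hXC⟩

theorem mul_eq_one_of_rank_eq [DecidableEq m] (h : IsMoorePenrose C X)
    (hrk : C.rank = Fintype.card m) : C * X = 1 := by
  obtain ⟨B, hB⟩ :=
    mulVec_surjective_iff_exists_right_inverse.mp (mulVec_surjective_of_rank_eq hrk)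
  calc C * X = C * X * (C * B) := by rw [hB, Matrix.mul_one]
    _ = C * B := by rw [← Matrix.mul_assoc, h.1]
    _ = 1 := hB

theorem vecMul_mul_mulVec (h : IsMoorePenrose C X) (d : m → ℝ) :
    (X *ᵥ d) ᵥ* (X * C) = X *ᵥ d := by
  rw [← h.2.2.2, vecMul_transpose, mulVec_mulVec, h.2.1]

end IsMoorePenrose

def augmentedPinv [DecidableEq n] (X : Matrix n m ℝ) (x : n → ℝ) (c : ℝ) :
    Matrix (n ⊕ Unit) m ℝ :=
  fromRows ((1 - c • vecMulVec x x) * X) (replicateRow Unit (c • (x ᵥ* X)))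

variable [DecidableEq n] {C : Matrix m n ℝ} {X : Matrix n m ℝ} {d : m → ℝ} {x : n → ℝ}

theorem fromCols_mul_augmentedPinv [DecidableEq m] (c : ℝ) (hCX : C * X = 1)
    (hx : C *ᵥ x = d) : fromCols C (replicateCol Unit d) * augmentedPinv X x c = 1 := by
  rw [augmentedPinv, fromCols_mul_fromRows, ← Matrix.mul_assoc, Matrix.mul_sub, Matrix.mul_one,
    Matrix.mul_smul, mul_vecMulVec, hx, Matrix.sub_mul, hCX, Matrix.smul_mul, vecMulVec_mul,
    ← vecMulVec_eq Unit, vecMulVec_smul, sub_add_cancel]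

theorem augmentedPinv_mul_fromCols_symm [Fintype m] (h : IsMoorePenrose C X)
    (hx : X *ᵥ d = x) :
    (augmentedPinv X x (1 + x ⬝ᵥ x)⁻¹ * fromCols C (replicateCol Unit d))ᵀ =
      augmentedPinv X x (1 + x ⬝ᵥ x)⁻¹ * fromCols C (replicateCol Unit d) := by
  set c := (1 + x ⬝ᵥ x)⁻¹
  have hxP : x ᵥ* (X * C) = x := hx ▸ h.vecMul_mul_mulVec d
  have hTL : (1 - c • vecMulVec x x) * X * C = X * C - c • vecMulVec x x := by
    rw [Matrix.mul_assoc, Matrix.sub_mul, Matrix.one_mul, Matrix.smul_mul, vecMulVec_mul, hxP]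
  have hTR : (1 - c • vecMulVec x x) * X * replicateCol Unit d = replicateCol Unit (c • x) := by
    rw [← replicateCol_mulVec, ← mulVec_mulVec, hx, one_sub_smul_vecMulVec_self_mulVec_self]
  have hBL : replicateRow Unit (c • (x ᵥ* X)) * C = replicateRow Unit (c • x) := by
    rw [← replicateRow_vecMul, smul_vecMul, vecMul_vecMul, hxP]
  have hBR : (replicateRow Unit (c • (x ᵥ* X)) * replicateCol Unit d)ᵀ =
      replicateRow Unit (c • (x ᵥ* X)) * replicateCol Unit d := by
    ext i j
    obtain rfl : i = j := Subsingleton.elim _ _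
    rfl
  rw [augmentedPinv, fromRows_mul_fromCols, fromBlocks_transpose, hTL, hTR, hBL, hBR,
    transpose_sub, transpose_smul, h.2.2.2, transpose_vecMulVec, transpose_replicateCol,
    transpose_replicateRow]

/-- For full-row-rank `C` and `x_C = C†d`, `ω = 1 + ‖x_C‖₂²`, the pseudoinverse of
`C̃ = [C d]` is the block matrix `[(I - ω⁻¹x_C x_Cᵀ)C† ; ω⁻¹ x_Cᵀ C†]`. -/
theorem pinv_of_augmented (p n : ℕ)
    (C : Matrix (Fin p) (Fin n) ℝ) (hrk : C.rank = p)
    (d : Fin p → ℝ)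
    (Cp : Matrix (Fin n) (Fin p) ℝ) (hCp : IsMoorePenrose C Cp)
    (xC : Fin n → ℝ) (hxC : xC = Cp *ᵥ d)
    (ω : ℝ) (hω : ω = 1 + ∑ i, xC i ^ 2) :
    IsMoorePenrose
      (fromCols C (Matrix.of fun i (_ : Unit) => d i))
      (fromRows ((1 - ω⁻¹ • vecMulVec xC xC) * Cp)
        (Matrix.of fun (_ : Unit) j => ω⁻¹ * ∑ i, xC i * Cp i j)) := by
  have hCCp : C * Cp = 1 := hCp.mul_eq_one_of_rank_eq (by rw [hrk, Fintype.card_fin])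
  have hCx : C *ᵥ xC = d := by rw [hxC, mulVec_mulVec, hCCp, one_mulVec]
  have hω' : ω = 1 + xC ⬝ᵥ xC := by simp only [hω, dotProduct, sq]
  have hX : fromRows ((1 - ω⁻¹ • vecMulVec xC xC) * Cp)
      (Matrix.of fun (_ : Unit) j => ω⁻¹ * ∑ i, xC i * Cp i j) = augmentedPinv Cp xC ω⁻¹ :=
    rfl
  rw [hX, hω']
  exact .of_mul_eq_one (fromCols_mul_augmentedPinv _ hCCp hCx)
    (augmentedPinv_mul_fromCols_symm hCp hxC.symm)
end

section
/- Let C ∈ ℝ^{p×n} have full row rank, d ∈ ℝ^p, x_C = C†d, ζ = (1 + ‖x_C‖₂²)^{-1/2}, and let Q₂ ∈ ℝ^{n×(n-p)} have orthonormal columns spanning the null space of C. Then the (n+1)×(n-p+1) matrix Q̃₂ = [[Q₂, ζx_C],[0, -ζ]] has orthonormal columns, and its columns span the null space of C̃ = [C d]. -/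
open Matrix

/-!
Full row rank makes `C C† = 1`, so `x_C` solves `C x = d`; and `x_C = C†d` lies in the row space
of `C`, hence is orthogonal to `null(C) = range Q₂`. A vector `(u, α)` lies in `null [C d]` exactly
when `u + α x_C ∈ null(C)`, so `null [C d]` is `null(C)` plus the line through `(x_C, -1)`, and
`ζ` is the factor normalising that vector.
-/

variable {m n k : Type*} [Fintype n]

namespace IsMoorePenrose

variable [Fintype m] {C : Matrix m n ℝ} {X : Matrix n m ℝ}

theorem mul_eq_one_of_rank_eq_card [DecidableEq m] (hX : IsMoorePenrose C X)
    (hrk : C.rank = Fintype.card m) : C * X = 1 := by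
  have hsurj : Function.Surjective C.mulVecLin := by
    rw [← LinearMap.range_eq_top]
    apply Submodule.eq_top_of_finrank_eq
    rw [← Matrix.rank, hrk, Module.finrank_fintype_fun_eq_card]
  have hcomp :
      (C * X).mulVecLin ∘ₗ C.mulVecLin = (1 : Matrix m m ℝ).mulVecLin ∘ₗ C.mulVecLin := by
    rw [← mulVecLin_mul, ← mulVecLin_mul, hX.1, Matrix.one_mul]
  exact Matrix.toLin'.injective ((LinearMap.cancel_right hsurj).1 hcomp)

theorem transpose_mul_eq_zero {Q : Matrix n k ℝ} (hX : IsMoorePenrose C X) (hCQ : C * Q = 0) :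
    Qᵀ * X = 0 :=
  calc Qᵀ * X = Qᵀ * ((X * C)ᵀ * X) := by rw [hX.2.2.2, hX.2.1]
    _ = (C * Q)ᵀ * (Xᵀ * X) := by simp only [transpose_mul, Matrix.mul_assoc]
    _ = 0 := by rw [hCQ, transpose_zero, Matrix.zero_mul]

end IsMoorePenrose

/-- The paper's `Q̃₂`, with `ζ` generalised to an arbitrary scalar `c`. -/
def augmentedNullBasis (Q : Matrix n k ℝ) (x : n → ℝ) (c : ℝ) :
    Matrix (n ⊕ Unit) (k ⊕ Unit) ℝ :=
  fromBlocks Q (of fun i (_ : Unit) => c * x i) 0 (of fun (_ : Unit) (_ : Unit) => -c)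

variable {Q : Matrix n k ℝ} {x : n → ℝ} {c : ℝ}

theorem augmentedNullBasis_transpose_mul_self [DecidableEq k] (hQ : Qᵀ * Q = 1)
    (hQx : Qᵀ *ᵥ x = 0) (hc : c ^ 2 * (1 + ∑ i, x i ^ 2) = 1) :
    (augmentedNullBasis Q x c)ᵀ * augmentedNullBasis Q x c = 1 := by
  have hQx' : ∀ j, ∑ i, Q i j * x i = 0 := fun j => by
    simpa [mulVec, dotProduct] using congrFun hQx j
  have hsq : ∑ i, c * x i * (c * x i) = c ^ 2 * ∑ i, x i ^ 2 := by
    rw [Finset.mul_sum]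
    exact Finset.sum_congr rfl fun i _ => by ring
  rw [augmentedNullBasis, fromBlocks_transpose, fromBlocks_multiply, ← fromBlocks_one]
  congr 1
  · simpa using hQ
  · ext j
    simp [mul_apply, mul_left_comm _ c, ← Finset.mul_sum, hQx']
  · ext _ j
    simp [mul_apply, mul_assoc, mul_comm (x _), ← Finset.mul_sum, hQx']
  · ext
    simp [mul_apply, hsq]
    linear_combination hc

variable {C : Matrix m n ℝ} {d : m → ℝ}

theorem fromCols_mul_augmentedNullBasis (hCQ : C * Q = 0) (hCx : C *ᵥ x = d) :
    fromCols C (of fun i (_ : Unit) => d i) * augmentedNullBasis Q x c = 0 := by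
  rw [augmentedNullBasis, fromCols_mul_fromBlocks, ← fromCols_zero]
  congr 1
  · simpa using hCQ
  · ext i
    simp [mul_apply, ← hCx, mulVec, dotProduct, mul_left_comm _ c, mul_comm _ c,
      ← Finset.mul_sum]

theorem exists_eq_augmentedNullBasis_mulVec [Fintype k]
    (hspan : ∀ u : n → ℝ, C *ᵥ u = 0 → ∃ w : k → ℝ, u = Q *ᵥ w) (hCx : C *ᵥ x = d)
    (hc : c ≠ 0) {v : n ⊕ Unit → ℝ} (hv : fromCols C (of fun i (_ : Unit) => d i) *ᵥ v = 0) :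
    ∃ w : k ⊕ Unit → ℝ, v = augmentedNullBasis Q x c *ᵥ w := by
  set α := v (Sum.inr ())
  have hker : C *ᵥ (v ∘ Sum.inl + α • x) = 0 := by
    rw [mulVec_add, mulVec_smul, hCx, ← hv, fromCols_mulVec]
    ext i
    simp [mulVec, dotProduct, α, mul_comm]
  obtain ⟨w, hw⟩ := hspan _ hker
  refine ⟨Sum.elim w fun _ => -α / c, ?_⟩
  ext (i | _)
  · have hwi := congrFun hw i
    simp [augmentedNullBasis, mulVec, dotProduct] at hwi ⊢
    field_simp
    linarith
  · simp [augmentedNullBasis, mulVec, dotProduct]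
    field_simp
    rfl

theorem augmented_nullspace_basis_general (p n k : ℕ)
    (C : Matrix (Fin p) (Fin n) ℝ) (hrk : C.rank = p) (d : Fin p → ℝ)
    (Cp : Matrix (Fin n) (Fin p) ℝ) (hCp : IsMoorePenrose C Cp)
    (xC : Fin n → ℝ) (hxC : xC = Cp *ᵥ d)
    (ζ : ℝ) (hζ : ζ = (Real.sqrt (1 + ∑ i, xC i ^ 2))⁻¹)
    (Q₂ : Matrix (Fin n) (Fin k) ℝ) (hQ₂ : Q₂ᵀ * Q₂ = 1) (hCQ₂ : C * Q₂ = 0)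
    (hspan : ∀ v : Fin n → ℝ, C *ᵥ v = 0 → ∃ w : Fin k → ℝ, v = Q₂ *ᵥ w) :
    (fromBlocks Q₂ (Matrix.of fun i (_ : Unit) => ζ * xC i)
        (0 : Matrix Unit (Fin k) ℝ) (Matrix.of fun (_ : Unit) (_ : Unit) => -ζ))ᵀ *
      (fromBlocks Q₂ (Matrix.of fun i (_ : Unit) => ζ * xC i)
        (0 : Matrix Unit (Fin k) ℝ) (Matrix.of fun (_ : Unit) (_ : Unit) => -ζ)) = 1 ∧
    (fromCols C (Matrix.of fun i (_ : Unit) => d i)) *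
      (fromBlocks Q₂ (Matrix.of fun i (_ : Unit) => ζ * xC i)
        (0 : Matrix Unit (Fin k) ℝ) (Matrix.of fun (_ : Unit) (_ : Unit) => -ζ)) = 0 ∧
    ∀ v : Fin n ⊕ Unit → ℝ,
      (fromCols C (Matrix.of fun i (_ : Unit) => d i)) *ᵥ v = 0 →
      ∃ w : Fin k ⊕ Unit → ℝ,
        v = (fromBlocks Q₂ (Matrix.of fun i (_ : Unit) => ζ * xC i)
          (0 : Matrix Unit (Fin k) ℝ) (Matrix.of fun (_ : Unit) (_ : Unit) => -ζ)) *ᵥ w := by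
  have hCCp : C * Cp = 1 := hCp.mul_eq_one_of_rank_eq_card (by rwa [Fintype.card_fin])
  have hCx : C *ᵥ xC = d := by rw [hxC, mulVec_mulVec, hCCp, one_mulVec]
  have hQx : Q₂ᵀ *ᵥ xC = 0 := by
    rw [hxC, mulVec_mulVec, hCp.transpose_mul_eq_zero hCQ₂, zero_mulVec]
  have hpos : 0 < 1 + ∑ i, xC i ^ 2 := by positivity
  have hζsq : ζ ^ 2 * (1 + ∑ i, xC i ^ 2) = 1 := by
    rw [hζ, inv_pow, Real.sq_sqrt hpos.le, inv_mul_cancel₀ hpos.ne']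
  have hζ0 : ζ ≠ 0 := by rw [hζ]; positivity
  exact ⟨augmentedNullBasis_transpose_mul_self hQ₂ hQx hζsq,
    fromCols_mul_augmentedNullBasis hCQ₂ hCx,
    fun _ hv => exists_eq_augmentedNullBasis_mulVec hspan hCx hζ0 hv⟩

/-- With `x_C = C†d`, `ζ = (1+‖x_C‖₂²)^{-1/2}` and `Q₂` an orthonormal basis of
`null(C)`, the matrix `Q̃₂ = [[Q₂, ζx_C],[0, -ζ]]` has orthonormal columns, and
its columns span the null space of `C̃ = [C d]`. -/
theorem augmented_nullspace_basis (p n k : ℕ) (hk : p + k = n)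
    (C : Matrix (Fin p) (Fin n) ℝ) (hrk : C.rank = p) (d : Fin p → ℝ)
    (Cp : Matrix (Fin n) (Fin p) ℝ) (hCp : IsMoorePenrose C Cp)
    (xC : Fin n → ℝ) (hxC : xC = Cp *ᵥ d)
    (ζ : ℝ) (hζ : ζ = (Real.sqrt (1 + ∑ i, xC i ^ 2))⁻¹)
    (Q₂ : Matrix (Fin n) (Fin k) ℝ) (hQ₂ : Q₂ᵀ * Q₂ = 1) (hCQ₂ : C * Q₂ = 0)
    (hspan : ∀ v : Fin n → ℝ, C *ᵥ v = 0 → ∃ w : Fin k → ℝ, v = Q₂ *ᵥ w) :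
    (fromBlocks Q₂ (Matrix.of fun i (_ : Unit) => ζ * xC i)
        (0 : Matrix Unit (Fin k) ℝ) (Matrix.of fun (_ : Unit) (_ : Unit) => -ζ))ᵀ *
      (fromBlocks Q₂ (Matrix.of fun i (_ : Unit) => ζ * xC i)
        (0 : Matrix Unit (Fin k) ℝ) (Matrix.of fun (_ : Unit) (_ : Unit) => -ζ)) = 1 ∧
    (fromCols C (Matrix.of fun i (_ : Unit) => d i)) *
      (fromBlocks Q₂ (Matrix.of fun i (_ : Unit) => ζ * xC i)
        (0 : Matrix Unit (Fin k) ℝ) (Matrix.of fun (_ : Unit) (_ : Unit) => -ζ)) = 0 ∧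
    ∀ v : Fin n ⊕ Unit → ℝ,
      (fromCols C (Matrix.of fun i (_ : Unit) => d i)) *ᵥ v = 0 →
      ∃ w : Fin k ⊕ Unit → ℝ,
        v = (fromBlocks Q₂ (Matrix.of fun i (_ : Unit) => ζ * xC i)
          (0 : Matrix Unit (Fin k) ℝ) (Matrix.of fun (_ : Unit) (_ : Unit) => -ζ)) *ᵥ w :=
  augmented_nullspace_basis_general p n k C hrk d Cp hCp xC hxC ζ hζ Q₂ hQ₂ hCQ₂ hspan
end

section
/- Let Q = [Q₁ Q₂] ∈ ℝ^{n×n} be orthogonal with Q₁ ∈ ℝ^{n×p}, R₁ ∈ ℝ^{p×p} invertible, A ∈ ℝ^{q×n}, and let σ̃ ≥ 0 satisfy that S₁₁ = Q₂ᵀAᵀAQ₂ - σ̃² I_{n-p} is invertible. For ε > 0 define H_ε = (CᵀC + ε²AᵀA - ε²σ̃_ε² I_n)⁻¹ Cᵀ where C = R₁ᵀQ₁ᵀ (so Cᵀ = Q₁R₁) and σ̃_ε → σ̃ as ε → 0+. Then lim_{ε→0+} H_ε = Q₁R₁^{-ᵀ} - Q₂S₁₁⁻¹Q₂ᵀAᵀAQ₁R₁^{-ᵀ}.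 -/
open Matrix Filter

section helpers
variable {α : Type*} {l : Filter α}

lemma tendsto_matrix_mul' {m n' r : Type*} [Fintype n'] {f : α → Matrix m n' ℝ}
    {g : α → Matrix n' r ℝ} {M : Matrix m n' ℝ} {N : Matrix n' r ℝ}
    (hf : Tendsto f l (nhds M)) (hg : Tendsto g l (nhds N)) :
    Tendsto (fun a => f a * g a) l (nhds (M * N)) := by
  have hcont : Continuous (fun p : Matrix m n' ℝ × Matrix n' r ℝ => p.1 * p.2) :=
    Continuous.matrix_mul continuous_fst continuous_snd
  exact (hcont.tendsto (M, N)).comp (hf.prodMk_nhds hg)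

lemma tendsto_matrix_inv' {m : Type*} [Fintype m] [DecidableEq m]
    {f : α → Matrix m m ℝ} {M : Matrix m m ℝ}
    (hf : Tendsto f l (nhds M)) (hM : IsUnit M) :
    Tendsto (fun a => (f a)⁻¹) l (nhds M⁻¹) := by
  have hdet : IsUnit M.det := (Matrix.isUnit_iff_isUnit_det M).mp hM
  have h1 : ContinuousAt Ring.inverse M.det := by
    simpa using NormedRing.inverse_continuousAt hdet.unit
  exact ((continuousAt_matrix_inv M h1).tendsto).comp hf

lemma eventually_isUnit_matrix' {m : Type*} [Fintype m] [DecidableEq m]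
    {f : α → Matrix m m ℝ} {M : Matrix m m ℝ}
    (hf : Tendsto f l (nhds M)) (hM : IsUnit M) :
    ∀ᶠ a in l, IsUnit (f a) := by
  have hdetc : Continuous (fun X : Matrix m m ℝ => X.det) :=
    Continuous.matrix_det continuous_id
  have hdet : Tendsto (fun a => (f a).det) l (nhds M.det) :=
    (hdetc.tendsto M).comp hf
  have hne : M.det ≠ 0 := ((Matrix.isUnit_iff_isUnit_det M).mp hM).ne_zero
  filter_upwards [hdet.eventually_ne hne] with a ha
  exact (Matrix.isUnit_iff_isUnit_det _).mpr (isUnit_iff_ne_zero.mpr ha)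

end helpers

/-- For `C = R₁ᵀQ₁ᵀ` (i.e. `Cᵀ = Q₁R₁`) with `[Q₁ Q₂]` orthogonal, `R₁` invertible,
and `σ̃_ε → σ̃` as `ε → 0+`, the matrices
`H_ε = (CᵀC + ε²AᵀA - ε²σ̃_ε²I)⁻¹Cᵀ` satisfy
`lim_{ε→0+} H_ε = Q₁R₁⁻ᵀ - Q₂S₁₁⁻¹Q₂ᵀAᵀAQ₁R₁⁻ᵀ` where
`S₁₁ = Q₂ᵀAᵀAQ₂ - σ̃²I`. -/
theorem limit_H_eps (p k n q : ℕ) (hn : p + k = n)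
    (Q₁ : Matrix (Fin n) (Fin p) ℝ) (Q₂ : Matrix (Fin n) (Fin k) ℝ)
    (hQ11 : Q₁ᵀ * Q₁ = 1) (hQ22 : Q₂ᵀ * Q₂ = 1) (hQ12 : Q₁ᵀ * Q₂ = 0)
    (hQfull : Q₁ * Q₁ᵀ + Q₂ * Q₂ᵀ = 1)
    (R₁ : Matrix (Fin p) (Fin p) ℝ) (hR : IsUnit R₁)
    (A : Matrix (Fin q) (Fin n) ℝ) (σ : ℝ) (hσ : 0 ≤ σ)
    (σε : ℝ → ℝ) (hσε : Tendsto σε (nhdsWithin 0 (Set.Ioi 0)) (nhds σ))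
    (C : Matrix (Fin p) (Fin n) ℝ) (hC : C = R₁ᵀ * Q₁ᵀ)
    (hS : IsUnit (Q₂ᵀ * Aᵀ * A * Q₂ - σ ^ 2 • (1 : Matrix (Fin k) (Fin k) ℝ)))
    (hinv : ∀ᶠ ε in nhdsWithin (0 : ℝ) (Set.Ioi 0),
      IsUnit (Cᵀ * C + ε ^ 2 • (Aᵀ * A) -
        (ε ^ 2 * σε ε ^ 2) • (1 : Matrix (Fin n) (Fin n) ℝ))) :
    Tendsto
      (fun ε : ℝ => (Cᵀ * C + ε ^ 2 • (Aᵀ * A) -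
        (ε ^ 2 * σε ε ^ 2) • (1 : Matrix (Fin n) (Fin n) ℝ))⁻¹ * Cᵀ)
      (nhdsWithin 0 (Set.Ioi 0))
      (nhds (Q₁ * (R₁ᵀ)⁻¹ -
        Q₂ * (Q₂ᵀ * Aᵀ * A * Q₂ - σ ^ 2 • (1 : Matrix (Fin k) (Fin k) ℝ))⁻¹ *
          Q₂ᵀ * Aᵀ * A * Q₁ * (R₁ᵀ)⁻¹)) := by
  set l := nhdsWithin (0 : ℝ) (Set.Ioi 0) with hl
  -- basic unit facts
  have hRT : IsUnit R₁ᵀ := by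
    rw [Matrix.isUnit_iff_isUnit_det, Matrix.det_transpose,
      ← Matrix.isUnit_iff_isUnit_det]; exact hR
  have hQ21 : Q₂ᵀ * Q₁ = 0 := by
    have := congrArg Matrix.transpose hQ12
    simpa using this
  have hCT : Cᵀ = Q₁ * R₁ := by
    rw [hC, Matrix.transpose_mul, Matrix.transpose_transpose, Matrix.transpose_transpose]
  -- block pieces
  set B11 : Matrix (Fin p) (Fin p) ℝ := Q₁ᵀ * Aᵀ * A * Q₁ with hB11
  set B12 : Matrix (Fin p) (Fin k) ℝ := Q₁ᵀ * Aᵀ * A * Q₂ with hB12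
  set B21 : Matrix (Fin k) (Fin p) ℝ := Q₂ᵀ * Aᵀ * A * Q₁ with hB21
  set S₀ : Matrix (Fin k) (Fin k) ℝ :=
    Q₂ᵀ * Aᵀ * A * Q₂ - σ ^ 2 • (1 : Matrix (Fin k) (Fin k) ℝ) with hS₀
  set S : ℝ → Matrix (Fin k) (Fin k) ℝ :=
    fun ε => Q₂ᵀ * Aᵀ * A * Q₂ - σε ε ^ 2 • (1 : Matrix (Fin k) (Fin k) ℝ) with hSdef
  set T : ℝ → Matrix (Fin p) (Fin p) ℝ :=
    fun ε => R₁ * R₁ᵀ + ε ^ 2 •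
      (B11 - σε ε ^ 2 • (1 : Matrix (Fin p) (Fin p) ℝ) - B12 * (S ε)⁻¹ * B21) with hTdef
  set G : ℝ → Matrix (Fin n) (Fin p) ℝ :=
    fun ε => Q₁ * ((T ε)⁻¹ * R₁) - Q₂ * ((S ε)⁻¹ * (B21 * ((T ε)⁻¹ * R₁))) with hGdef
  -- tendsto of S
  have hStend : Tendsto S l (nhds S₀) := by
    apply Tendsto.const_sub
    exact (hσε.pow 2).smul_const _
  have hSU : ∀ᶠ ε in l, IsUnit (S ε) := eventually_isUnit_matrix' hStend hS
  have hSinv : Tendsto (fun ε => (S ε)⁻¹) l (nhds S₀⁻¹) := tendsto_matrix_inv' hStend hS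
  -- tendsto of T
  have hT0U : IsUnit (R₁ * R₁ᵀ) := hR.mul hRT
  have heps : Tendsto (fun ε : ℝ => ε ^ 2) l (nhds 0) := by
    have : Tendsto (fun ε : ℝ => ε ^ 2) (nhds 0) (nhds ((0:ℝ) ^ 2)) :=
      (continuous_pow 2).tendsto 0
    simpa using this.mono_left nhdsWithin_le_nhds
  have hTtend : Tendsto T l (nhds (R₁ * R₁ᵀ)) := by
    have hmat : Tendsto
        (fun ε => B11 - σε ε ^ 2 • (1 : Matrix (Fin p) (Fin p) ℝ) - B12 * (S ε)⁻¹ * B21) l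
        (nhds (B11 - σ ^ 2 • (1 : Matrix (Fin p) (Fin p) ℝ) - B12 * S₀⁻¹ * B21)) := by
      apply Tendsto.sub
      · exact Tendsto.const_sub _ ((hσε.pow 2).smul_const _)
      · exact tendsto_matrix_mul' (tendsto_matrix_mul' tendsto_const_nhds hSinv) tendsto_const_nhds
    have := heps.smul hmat
    rw [zero_smul] at this
    have h2 := (tendsto_const_nhds (x := R₁ * R₁ᵀ) (f := l)).add this
    simpa using h2
  have hTU : ∀ᶠ ε in l, IsUnit (T ε) := eventually_isUnit_matrix' hTtend hT0U
  have hTinv : Tendsto (fun ε => (T ε)⁻¹) l (nhds (R₁ * R₁ᵀ)⁻¹) :=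
    tendsto_matrix_inv' hTtend hT0U
  -- limit of (T)⁻¹ * R₁
  have hRR : (R₁ * R₁ᵀ)⁻¹ * R₁ = (R₁ᵀ)⁻¹ := by
    rw [Matrix.mul_inv_rev, Matrix.mul_assoc,
      Matrix.nonsing_inv_mul R₁ ((Matrix.isUnit_iff_isUnit_det R₁).mp hR), Matrix.mul_one]
  have hXtend : Tendsto (fun ε => (T ε)⁻¹ * R₁) l (nhds ((R₁ᵀ)⁻¹)) := by
    have := tendsto_matrix_mul' hTinv (tendsto_const_nhds (x := R₁) (f := l))
    rwa [hRR] at this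
  -- limit of G
  have hGtend : Tendsto G l
      (nhds (Q₁ * (R₁ᵀ)⁻¹ - Q₂ * (S₀⁻¹ * (B21 * (R₁ᵀ)⁻¹)))) := by
    apply Tendsto.sub
    · exact tendsto_matrix_mul' tendsto_const_nhds hXtend
    · exact tendsto_matrix_mul' tendsto_const_nhds
        (tendsto_matrix_mul' hSinv (tendsto_matrix_mul' tendsto_const_nhds hXtend))
  -- eventual equality of H and G
  have hHG : ∀ᶠ ε in l,
      (Cᵀ * C + ε ^ 2 • (Aᵀ * A) -
        (ε ^ 2 * σε ε ^ 2) • (1 : Matrix (Fin n) (Fin n) ℝ))⁻¹ * Cᵀ = G ε := by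
    filter_upwards [hinv, hSU, hTU] with ε hMU hSUε hTUε
    have hc11 : ∀ {m : Type} (x : Matrix (Fin p) m ℝ), Q₁ᵀ * (Q₁ * x) = x := by
      intro m x; rw [← Matrix.mul_assoc, hQ11, Matrix.one_mul]
    have hc22 : ∀ {m : Type} (x : Matrix (Fin k) m ℝ), Q₂ᵀ * (Q₂ * x) = x := by
      intro m x; rw [← Matrix.mul_assoc, hQ22, Matrix.one_mul]
    have hc12 : ∀ {m : Type} (x : Matrix (Fin k) m ℝ), Q₁ᵀ * (Q₂ * x) = 0 := by
      intro m x; rw [← Matrix.mul_assoc, hQ12, Matrix.zero_mul]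
    have hc21 : ∀ {m : Type} (x : Matrix (Fin p) m ℝ), Q₂ᵀ * (Q₁ * x) = 0 := by
      intro m x; rw [← Matrix.mul_assoc, hQ21, Matrix.zero_mul]
    have hSS : S ε * (S ε)⁻¹ = 1 :=
      Matrix.mul_nonsing_inv _ ((Matrix.isUnit_iff_isUnit_det _).mp hSUε)
    have hTT : T ε * (T ε)⁻¹ = 1 :=
      Matrix.mul_nonsing_inv _ ((Matrix.isUnit_iff_isUnit_det _).mp hTUε)
    have hSS' : Q₂ᵀ * Aᵀ * A * Q₂ * (S ε)⁻¹ =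
        1 + σε ε ^ 2 • (S ε)⁻¹ := by
      have h := hSS
      rw [hSdef] at h
      simp only [Matrix.sub_mul, Matrix.smul_mul, Matrix.one_mul] at h
      rw [sub_eq_iff_eq_add] at h
      rw [h]
    have hB22 : ∀ {m : Type} (x : Matrix (Fin k) m ℝ),
        Q₂ᵀ * (Aᵀ * (A * (Q₂ * ((S ε)⁻¹ * x)))) = x + σε ε ^ 2 • ((S ε)⁻¹ * x) := by
      intro m x
      have h : Q₂ᵀ * (Aᵀ * (A * (Q₂ * ((S ε)⁻¹ * x)))) =
          (Q₂ᵀ * Aᵀ * A * Q₂ * (S ε)⁻¹) * x := by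
        simp only [Matrix.mul_assoc]
      rw [h, hSS']; simp [Matrix.add_mul, Matrix.smul_mul, Matrix.mul_assoc]
    set M : Matrix (Fin n) (Fin n) ℝ := Cᵀ * C + ε ^ 2 • (Aᵀ * A) -
        (ε ^ 2 * σε ε ^ 2) • (1 : Matrix (Fin n) (Fin n) ℝ) with hM
    have h1 : Q₁ᵀ * (M * G ε) = R₁ := by
      have key : Q₁ᵀ * (M * G ε) = T ε * ((T ε)⁻¹ * R₁) := by
        simp only [hM, hGdef, hTdef, hB11, hB12, hB21, hSdef, hC, Matrix.transpose_mul,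
          Matrix.transpose_transpose]
        simp only [Matrix.mul_sub, Matrix.sub_mul, Matrix.mul_add, Matrix.add_mul,
          Matrix.smul_mul, Matrix.mul_smul, Matrix.mul_assoc, Matrix.one_mul,
          Matrix.mul_one, hc11, hc12, hc21, hc22, Matrix.zero_mul, Matrix.mul_zero,
          smul_zero, sub_zero, add_zero, zero_sub, smul_smul, smul_sub, smul_add]
        module
      rw [key, ← Matrix.mul_assoc, hTT, Matrix.one_mul]
    have h2 : Q₂ᵀ * (M * G ε) = 0 := by
      simp only [hM, hGdef, hB21, hC, Matrix.transpose_mul, Matrix.transpose_transpose]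
      simp only [Matrix.mul_sub, Matrix.sub_mul, Matrix.mul_add, Matrix.add_mul,
        Matrix.smul_mul, Matrix.mul_smul, Matrix.mul_assoc, Matrix.one_mul,
        Matrix.mul_one, hc11, hc12, hc21, hc22, hB22, Matrix.zero_mul, Matrix.mul_zero,
        smul_zero, sub_zero, add_zero, zero_sub, smul_smul, smul_sub, smul_add]
      module
    have hMG : M * G ε = Cᵀ := by
      calc M * G ε = 1 * (M * G ε) := (Matrix.one_mul _).symm
        _ = (Q₁ * Q₁ᵀ + Q₂ * Q₂ᵀ) * (M * G ε) := by rw [hQfull]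
        _ = Q₁ * (Q₁ᵀ * (M * G ε)) + Q₂ * (Q₂ᵀ * (M * G ε)) := by
            rw [Matrix.add_mul, Matrix.mul_assoc, Matrix.mul_assoc]
        _ = Q₁ * R₁ := by rw [h1, h2, Matrix.mul_zero, add_zero]
        _ = Cᵀ := hCT.symm
    rw [← hMG, ← Matrix.mul_assoc,
      Matrix.nonsing_inv_mul _ ((Matrix.isUnit_iff_isUnit_det _).mp hMU), Matrix.one_mul]
  -- conclude
  have hfinal : Q₁ * (R₁ᵀ)⁻¹ - Q₂ * (S₀⁻¹ * (B21 * (R₁ᵀ)⁻¹)) =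
      Q₁ * (R₁ᵀ)⁻¹ - Q₂ * S₀⁻¹ * Q₂ᵀ * Aᵀ * A * Q₁ * (R₁ᵀ)⁻¹ := by
    rw [hB21]; simp only [Matrix.mul_assoc]
  refine Tendsto.congr' (EventuallyEq.symm hHG) ?_
  rw [← hfinal]
  exact hGtend
end

section
/- With the notation of the TLSE problem: let C ∈ ℝ^{p×n} full row rank, Cᵀ = Q₁R₁ thin QR, Q₂ orthonormal basis of null(C), 𝒫 = I_n - C†C, A ∈ ℝ^{q×n}, σ̃ ≥ 0, S₁₁ = Q₂ᵀAᵀAQ₂ - σ̃²I_{n-p} invertible. Then 𝒦 := Q₂S₁₁⁻¹Q₂ᵀ equals the Moore–Penrose pseudoinverse of 𝒫(AᵀA - σ̃²I_n)𝒫. -/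
open Matrix

/-- With `𝒫 = I - C†C` and `S₁₁ = Q₂ᵀAᵀAQ₂ - σ̃²I` invertible,
`𝒦 = Q₂S₁₁⁻¹Q₂ᵀ` equals the Moore–Penrose pseudoinverse of
`𝒫(AᵀA - σ̃²I)𝒫`. -/
theorem K_is_pinv (p k n q : ℕ) (hk : p + k = n)
    (C : Matrix (Fin p) (Fin n) ℝ) (hrk : C.rank = p)
    (Cp : Matrix (Fin n) (Fin p) ℝ) (hCp : IsMoorePenrose C Cp)
    (Q₂ : Matrix (Fin n) (Fin k) ℝ) (hQ₂ : Q₂ᵀ * Q₂ = 1) (hCQ₂ : C * Q₂ = 0)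
    (hspan : ∀ v : Fin n → ℝ, C *ᵥ v = 0 → ∃ w : Fin k → ℝ, v = Q₂ *ᵥ w)
    (A : Matrix (Fin q) (Fin n) ℝ) (σ : ℝ) (hσ : 0 ≤ σ)
    (hS : IsUnit (Q₂ᵀ * Aᵀ * A * Q₂ - σ ^ 2 • (1 : Matrix (Fin k) (Fin k) ℝ))) :
    IsMoorePenrose
      ((1 - Cp * C) * (Aᵀ * A - σ ^ 2 • (1 : Matrix (Fin n) (Fin n) ℝ)) * (1 - Cp * C))
      (Q₂ * (Q₂ᵀ * Aᵀ * A * Q₂ - σ ^ 2 • (1 : Matrix (Fin k) (Fin k) ℝ))⁻¹ * Q₂ᵀ) := by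
  set S : Matrix (Fin k) (Fin k) ℝ :=
    Q₂ᵀ * Aᵀ * A * Q₂ - σ ^ 2 • (1 : Matrix (Fin k) (Fin k) ℝ) with hSdef
  set P : Matrix (Fin n) (Fin n) ℝ := 1 - Cp * C with hPdef
  have hSinv : S * S⁻¹ = 1 := Matrix.mul_nonsing_inv S ((Matrix.isUnit_iff_isUnit_det S).mp hS)
  have hSinv' : S⁻¹ * S = 1 := Matrix.nonsing_inv_mul S ((Matrix.isUnit_iff_isUnit_det S).mp hS)
  have hPsymm : Pᵀ = P := by
    simp [hPdef, transpose_sub, hCp.2.2.2]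
  have hCP : C * P = 0 := by
    simp only [hPdef, Matrix.mul_sub, Matrix.mul_one]
    rw [← Matrix.mul_assoc, hCp.1]; simp
  have hPQ : P * Q₂ = Q₂ := by
    simp only [hPdef, Matrix.sub_mul, Matrix.one_mul, Matrix.mul_assoc, hCQ₂]
    simp
  have hQQP : Q₂ * Q₂ᵀ * P = P := by
    ext i j
    obtain ⟨w, hw⟩ := hspan (fun i => P i j) (by
      funext i'
      have : (C * P) i' j = 0 := by rw [hCP]; rfl
      simpa [Matrix.mulVec, Matrix.mul_apply, dotProduct] using this)
    have hQ1 : Q₂ * Q₂ᵀ * Q₂ = Q₂ := by rw [Matrix.mul_assoc, hQ₂, Matrix.mul_one]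
    have hmv : (Q₂ * Q₂ᵀ) *ᵥ (Q₂ *ᵥ w) = Q₂ *ᵥ w := by
      rw [Matrix.mulVec_mulVec, hQ1]
    have h2 : ((Q₂ * Q₂ᵀ) *ᵥ fun i' => P i' j) i = P i j := by
      calc ((Q₂ * Q₂ᵀ) *ᵥ fun i' => P i' j) i
          = ((Q₂ * Q₂ᵀ) *ᵥ (Q₂ *ᵥ w)) i := by rw [hw]
        _ = (Q₂ *ᵥ w) i := by rw [hmv]
        _ = P i j := (congrFun hw i).symm
    simpa [Matrix.mul_apply, Matrix.mulVec, dotProduct] using h2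
  have hP : P = Q₂ * Q₂ᵀ := by
    have hT := congrArg transpose hQQP
    simp only [transpose_mul, transpose_transpose, hPsymm] at hT
    calc P = Pᵀ := hPsymm.symm
    _ = (Q₂ * Q₂ᵀ * P)ᵀ := by rw [hQQP]
    _ = Pᵀ * Q₂ * Q₂ᵀ := by simp [transpose_mul, Matrix.mul_assoc]
    _ = Q₂ * Q₂ᵀ := by rw [hPsymm, hPQ]
  have hM : P * (Aᵀ * A - σ ^ 2 • (1 : Matrix (Fin n) (Fin n) ℝ)) * P = Q₂ * S * Q₂ᵀ := by
    rw [hP, hSdef]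
    simp only [Matrix.mul_sub, Matrix.sub_mul, Matrix.mul_smul, Matrix.smul_mul,
      Matrix.mul_one, Matrix.one_mul, Matrix.mul_assoc, hQ₂]
    rw [← Matrix.mul_assoc Q₂ᵀ Q₂ Q₂ᵀ, hQ₂, Matrix.one_mul]
  rw [hM]
  have key1 : Q₂ * S * Q₂ᵀ * (Q₂ * S⁻¹ * Q₂ᵀ) = Q₂ * Q₂ᵀ := by
    calc Q₂ * S * Q₂ᵀ * (Q₂ * S⁻¹ * Q₂ᵀ)
        = Q₂ * (S * ((Q₂ᵀ * Q₂) * S⁻¹)) * Q₂ᵀ := by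
          simp only [Matrix.mul_assoc]
      _ = Q₂ * Q₂ᵀ := by rw [hQ₂, Matrix.one_mul, hSinv, Matrix.mul_one]
  have key2 : Q₂ * S⁻¹ * Q₂ᵀ * (Q₂ * S * Q₂ᵀ) = Q₂ * Q₂ᵀ := by
    calc Q₂ * S⁻¹ * Q₂ᵀ * (Q₂ * S * Q₂ᵀ)
        = Q₂ * (S⁻¹ * ((Q₂ᵀ * Q₂) * S)) * Q₂ᵀ := by
          simp only [Matrix.mul_assoc]
      _ = Q₂ * Q₂ᵀ := by rw [hQ₂, Matrix.one_mul, hSinv', Matrix.mul_one]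
  refine ⟨?_, ?_, ?_, ?_⟩
  · rw [key1]
    calc Q₂ * Q₂ᵀ * (Q₂ * S * Q₂ᵀ) = Q₂ * ((Q₂ᵀ * Q₂) * (S * Q₂ᵀ)) := by
          simp only [Matrix.mul_assoc]
      _ = Q₂ * S * Q₂ᵀ := by rw [hQ₂, Matrix.one_mul, Matrix.mul_assoc]
  · rw [Matrix.mul_assoc (Q₂ * S⁻¹ * Q₂ᵀ)] at *
    rw [key1]
    calc Q₂ * S⁻¹ * Q₂ᵀ * (Q₂ * Q₂ᵀ) = Q₂ * (S⁻¹ * ((Q₂ᵀ * Q₂) * Q₂ᵀ)) := by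
          simp only [Matrix.mul_assoc]
      _ = Q₂ * S⁻¹ * Q₂ᵀ := by rw [hQ₂, Matrix.one_mul, Matrix.mul_assoc]
  · rw [key1]; simp [transpose_mul]
  · rw [key2]; simp [transpose_mul]
end

section
/- Let t ∈ ℝ^m be nonzero, s ∈ ℝ^n be nonzero, α, β > 0, c₁ = √(β²/α² + 1/‖s‖₂²), c₂ = c₁ + 1/‖s‖₂, and define the (m+n)×(m+n) block matrix M = [[c₁I_m - c₂ t tᵀ/‖t‖₂², (β/α) t sᵀ/(‖t‖₂‖s‖₂)],[0, I_n]]. Then MMᵀ = [[(β²/α² + 1/‖s‖₂²)I_m, 0],[0, I_n]] + (β/α)[[0, tsᵀ/(‖t‖₂‖s‖₂)],[stᵀ/(‖t‖₂‖s‖₂), 0]], and consequently ‖M‖₂² ≤ max{1, β²/α² + 1/‖s‖₂²} + β/α. -/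
/-!
In `M Mᵀ` the rank-one terms `t tᵀ` of the top-left block cancel, because `c₂ - c₁ = 1/‖s‖` and
`c₁² = β²/α² + 1/‖s‖²`. The norm bound then follows from the C*-identity `‖M‖² = ‖M Mᵀ‖` and the
triangle inequality: the diagonal part has norm `max 1 (β²/α² + 1/‖s‖²)`, and the off-diagonal
part `N` is a partial isometry (`N Nᵀ N = N`, so `Nᵀ N` is an orthogonal projection), whence
`‖N‖ ≤ 1`.
-/

open Matrix

/-- Spectral norm of a real matrix: the operator norm of the induced map between
Euclidean spaces. -/
noncomputable def specNorm {m n : Type*} [Fintype m] [Fintype n] [DecidableEq n]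
    (M : Matrix m n ℝ) : ℝ :=
  ‖LinearMap.toContinuousLinearMap (Matrix.toEuclideanLin M)‖

theorem norm_le_one_of_mul_star_mul_self {E : Type*} [NonUnitalNormedRing E] [StarRing E]
    [CStarRing E] {a : E} (h : a * star a * a = a) : ‖a‖ ≤ 1 := by
  have hproj : IsStarProjection (star a * a) :=
    ⟨by rw [IsIdempotentElem, mul_assoc, ← mul_assoc a, h], .star_mul_self a⟩
  have hsq := hproj.norm_le
  rw [CStarRing.norm_star_mul_self] at hsq
  nlinarith [norm_nonneg a]

namespace Matrix

theorem sum_sq_eq_dotProduct_self {ι R : Type*} [Fintype ι] [CommSemiring R] (v : ι → R) :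
    ∑ i, v i ^ 2 = v ⬝ᵥ v := by
  simp only [dotProduct, sq]

variable {l m n α : Type*} [Fintype m] [Fintype n] [CommRing α]

theorem fromBlocks_zero_one_mul_transpose [Fintype l] [DecidableEq n] (A : Matrix l m α)
    (B : Matrix l n α) :
    fromBlocks A B 0 1 * (fromBlocks A B 0 1)ᵀ = fromBlocks (A * Aᵀ + B * Bᵀ) B Bᵀ 1 := by
  simp [fromBlocks_transpose, fromBlocks_multiply]

theorem vecMulVec_mul_transpose_self (u : l → α) (v : n → α) :
    vecMulVec u v * (vecMulVec u v)ᵀ = (v ⬝ᵥ v) • vecMulVec u u := by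
  rw [transpose_vecMulVec, vecMulVec_mul_vecMulVec, vecMulVec_smul]

theorem smul_one_sub_smul_vecMulVec_mul_transpose_self [DecidableEq m] (a b : α) (u : m → α) :
    (a • 1 - b • vecMulVec u u) * (a • 1 - b • vecMulVec u u)ᵀ =
      a ^ 2 • 1 + (b ^ 2 * (u ⬝ᵥ u) - 2 * a * b) • vecMulVec u u := by
  simp only [transpose_sub, transpose_smul, transpose_one, transpose_vecMulVec, sub_mul, mul_sub,
    smul_mul_smul_comm, Matrix.one_mul, Matrix.mul_one, vecMulVec_mul_vecMulVec, vecMulVec_smul]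
  match_scalars <;> ring

theorem fromBlocks_vecMulVec_antidiag_mul_transpose_mul (c : α) (u : m → α) (v : n → α) :
    fromBlocks 0 (c • vecMulVec u v) (c • vecMulVec v u) 0 *
        (fromBlocks 0 (c • vecMulVec u v) (c • vecMulVec v u) 0)ᵀ *
        fromBlocks 0 (c • vecMulVec u v) (c • vecMulVec v u) 0 =
      (c ^ 2 * (u ⬝ᵥ u) * (v ⬝ᵥ v)) • fromBlocks 0 (c • vecMulVec u v) (c • vecMulVec v u) 0 := by
  simp only [fromBlocks_transpose, fromBlocks_multiply, transpose_zero, transpose_smul,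
    transpose_vecMulVec, Matrix.zero_mul, Matrix.mul_zero, add_zero, zero_add,
    Matrix.smul_mul, Matrix.mul_smul, vecMulVec_mul_vecMulVec, vecMulVec_smul, fromBlocks_smul,
    smul_zero, smul_smul]
  congr 2 <;> ring

theorem fromBlocks_mul_transpose_eq_of_sq {K : Type*} [Field K] [DecidableEq m] [DecidableEq n]
    (t : m → K) (s : n → K) (α β nt ns c₁ c₂ : K) (hα : α ≠ 0) (hnt : nt ≠ 0) (hns : ns ≠ 0)
    (htt : t ⬝ᵥ t = nt ^ 2) (hss : s ⬝ᵥ s = ns ^ 2) (hc₁ : c₁ ^ 2 = β ^ 2 / α ^ 2 + 1 / ns ^ 2)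
    (hc₂ : c₂ = c₁ + 1 / ns) :
    fromBlocks (c₁ • 1 - (c₂ / nt ^ 2) • vecMulVec t t) ((β / (α * nt * ns)) • vecMulVec t s) 0 1 *
        (fromBlocks (c₁ • 1 - (c₂ / nt ^ 2) • vecMulVec t t)
          ((β / (α * nt * ns)) • vecMulVec t s) 0 1)ᵀ =
      fromBlocks ((β ^ 2 / α ^ 2 + 1 / ns ^ 2) • 1) 0 0 1 +
        (β / α) • fromBlocks 0 ((1 / (nt * ns)) • vecMulVec t s)
          ((1 / (nt * ns)) • vecMulVec s t) 0 := by
  have hc₁' : c₁ ^ 2 * (α ^ 2 * ns ^ 2) = β ^ 2 * ns ^ 2 + α ^ 2 := by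
    rw [hc₁]
    field_simp
  rw [fromBlocks_zero_one_mul_transpose, fromBlocks_smul, fromBlocks_add]
  congr 1
  · rw [smul_one_sub_smul_vecMulVec_mul_transpose_self, transpose_smul, Matrix.smul_mul,
      Matrix.mul_smul, vecMulVec_mul_transpose_self, htt, hss, smul_zero, add_zero]
    match_scalars
    · linear_combination hc₁
    · rw [hc₂]
      field_simp
      linear_combination (-1 : K) * hc₁'
  · rw [zero_add, smul_smul]
    congr 1
    field_simp
  · rw [zero_add, transpose_smul, transpose_vecMulVec, smul_smul]
    congr 1
    field_simp
  · simp

section L2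

open scoped Matrix.Norms.L2Operator

theorem specNorm_eq_l2_opNorm [DecidableEq n] (A : Matrix m n ℝ) : specNorm A = ‖A‖ := rfl

theorem l2_opNorm_mul_transpose_self [DecidableEq m] [DecidableEq n] (A : Matrix m n ℝ) :
    ‖A * Aᵀ‖ = ‖A‖ ^ 2 := by
  rw [sq, ← l2_opNorm_conjTranspose A, ← l2_opNorm_conjTranspose_mul_self Aᴴ,
    conjTranspose_conjTranspose, conjTranspose_eq_transpose_of_trivial]

theorem l2_opNorm_fromBlocks_smul_one_zero_zero_one_le {𝕜 : Type*} [RCLike 𝕜] [DecidableEq m]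
    [DecidableEq n] (d : 𝕜) :
    ‖fromBlocks (d • (1 : Matrix m m 𝕜)) 0 0 (1 : Matrix n n 𝕜)‖ ≤ max 1 ‖d‖ := by
  rw [smul_one_eq_diagonal, ← diagonal_one, fromBlocks_diagonal, l2_opNorm_diagonal]
  refine (pi_norm_le_iff_of_nonneg (by positivity)).mpr fun i => ?_
  rcases i with i | i <;> simp

theorem l2_opNorm_fromBlocks_vecMulVec_antidiag_le_one [DecidableEq m] [DecidableEq n] (c : ℝ)
    (u : m → ℝ) (v : n → ℝ) (h : c ^ 2 * (u ⬝ᵥ u) * (v ⬝ᵥ v) = 1) :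
    ‖fromBlocks 0 (c • vecMulVec u v) (c • vecMulVec v u) 0‖ ≤ 1 := by
  refine norm_le_one_of_mul_star_mul_self ?_
  rw [star_eq_conjTranspose, conjTranspose_eq_transpose_of_trivial,
    fromBlocks_vecMulVec_antidiag_mul_transpose_mul, h, one_smul]

end L2

end Matrix

open scoped Matrix.Norms.L2Operator

/-- For nonzero `t, s` and `α, β > 0`, with `c₁ = √(β²/α² + 1/‖s‖₂²)`,
`c₂ = c₁ + 1/‖s‖₂`, the block matrix
`M = [[c₁I - c₂ttᵀ/‖t‖₂², (β/α)tsᵀ/(‖t‖₂‖s‖₂)],[0, I]]` satisfies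
`MMᵀ = [[(β²/α² + 1/‖s‖₂²)I, 0],[0, I]] + (β/α)[[0, tsᵀ/(‖t‖₂‖s‖₂)],[stᵀ/(‖t‖₂‖s‖₂), 0]]`
and hence `‖M‖₂² ≤ max{1, β²/α² + 1/‖s‖₂²} + β/α`. -/
theorem block_matrix_norm_bound (m n : ℕ)
    (t : Fin m → ℝ) (s : Fin n → ℝ) (ht : t ≠ 0) (hs : s ≠ 0)
    (α β : ℝ) (hα : 0 < α) (hβ : 0 < β)
    (nt ns c₁ c₂ : ℝ)
    (hnt : nt = Real.sqrt (∑ i, t i ^ 2)) (hns : ns = Real.sqrt (∑ i, s i ^ 2))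
    (hc₁ : c₁ = Real.sqrt (β ^ 2 / α ^ 2 + 1 / ns ^ 2)) (hc₂ : c₂ = c₁ + 1 / ns) :
    (fromBlocks (c₁ • (1 : Matrix (Fin m) (Fin m) ℝ) - (c₂ / nt ^ 2) • vecMulVec t t)
          ((β / (α * nt * ns)) • vecMulVec t s)
          (0 : Matrix (Fin n) (Fin m) ℝ) (1 : Matrix (Fin n) (Fin n) ℝ)) *
        (fromBlocks (c₁ • (1 : Matrix (Fin m) (Fin m) ℝ) - (c₂ / nt ^ 2) • vecMulVec t t)
          ((β / (α * nt * ns)) • vecMulVec t s)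
          (0 : Matrix (Fin n) (Fin m) ℝ) (1 : Matrix (Fin n) (Fin n) ℝ))ᵀ =
      fromBlocks ((β ^ 2 / α ^ 2 + 1 / ns ^ 2) • (1 : Matrix (Fin m) (Fin m) ℝ)) 0 0
          (1 : Matrix (Fin n) (Fin n) ℝ) +
        (β / α) • fromBlocks (0 : Matrix (Fin m) (Fin m) ℝ)
          ((1 / (nt * ns)) • vecMulVec t s) ((1 / (nt * ns)) • vecMulVec s t)
          (0 : Matrix (Fin n) (Fin n) ℝ) ∧
    specNorm (fromBlocks (c₁ • (1 : Matrix (Fin m) (Fin m) ℝ) - (c₂ / nt ^ 2) • vecMulVec t t)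
          ((β / (α * nt * ns)) • vecMulVec t s)
          (0 : Matrix (Fin n) (Fin m) ℝ) (1 : Matrix (Fin n) (Fin n) ℝ)) ^ 2 ≤
      max 1 (β ^ 2 / α ^ 2 + 1 / ns ^ 2) + β / α := by
  rw [sum_sq_eq_dotProduct_self] at hnt hns
  have htt : 0 < t ⬝ᵥ t := by simpa using dotProduct_self_star_pos_iff.mpr ht
  have hss : 0 < s ⬝ᵥ s := by simpa using dotProduct_self_star_pos_iff.mpr hs
  have hnt0 : 0 < nt := hnt ▸ Real.sqrt_pos.mpr htt
  have hns0 : 0 < ns := hns ▸ Real.sqrt_pos.mpr hss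
  have hnt2 : t ⬝ᵥ t = nt ^ 2 := by rw [hnt, Real.sq_sqrt htt.le]
  have hns2 : s ⬝ᵥ s = ns ^ 2 := by rw [hns, Real.sq_sqrt hss.le]
  have hc₁2 : c₁ ^ 2 = β ^ 2 / α ^ 2 + 1 / ns ^ 2 := by rw [hc₁, Real.sq_sqrt (by positivity)]
  have hMM := fromBlocks_mul_transpose_eq_of_sq t s α β nt ns c₁ c₂ hα.ne' hnt0.ne' hns0.ne'
    hnt2 hns2 hc₁2 hc₂
  have hN := l2_opNorm_fromBlocks_vecMulVec_antidiag_le_one (1 / (nt * ns)) t s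
    (by rw [hnt2, hns2]; field_simp)
  refine ⟨hMM, ?_⟩
  rw [specNorm_eq_l2_opNorm, ← l2_opNorm_mul_transpose_self, hMM]
  grw [norm_add_le, norm_smul, l2_opNorm_fromBlocks_smul_one_zero_zero_one_le, hN,
    Real.norm_of_nonneg (by positivity), Real.norm_of_nonneg (by positivity), mul_one]
end
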